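/- arXiv:1710.08647 — 4 statements merged into one kernel-verified Lean document; each statement's English description precedes it below -/
import Mathlib

section
/- Let A = (Q, δ, I, F) be an NFA over a finite alphabet Σ, let μ : Σ* → [0,∞) be summable with D(L) = ∑_{w∈L} μ(w), and let V ⊆ Q. Then the probabilistic distance between A and its pruning is bounded by the sum of the state labels ℓ³_p: D(L(A) △ L(A|_{Q∖V})) ≤ ∑_{q∈V} D(B_A(q)·L_A(q)). -/
/-!
Pruning only removes runs, so `L(A|_{Q∖V}) ⊆ L(A)` and the symmetric difference is
`L(A) ∖ L(A|_{Q∖V})`. An accepting run of `A` that is lost by pruning visits some `q ∈ V`;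
cutting the word at that visit places it in `B_A(q)·L_A(q)`. Hence the symmetric difference
is covered by these concatenations, and `D` is monotone and finitely subadditive.
-/

/-- `langWeight μ L` is `D(L) = ∑_{w ∈ L} μ(w)`. -/
noncomputable def langWeight {α : Type*} (μ : List α → ℝ) (L : Set (List α)) : ℝ :=
  ∑' w : L, μ (w : List α)

/-- The language of an NFA, as a set of words. -/
def lang {α σ : Type*} (A : NFA α σ) : Set (List α) :=
  {w | ∃ qf ∈ A.accept, qf ∈ A.eval w}

/-- The banguage of a state `q`: words over which some run from an initial
state of `A` ends in `q`. -/
def bang {α σ : Type*} (A : NFA α σ) (q : σ) : Set (List α) :=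
  {w | q ∈ A.eval w}

/-- The language of a state `q`: words over which some run from `q` ends in an
accepting state of `A`. -/
def langOf {α σ : Type*} (A : NFA α σ) (q : σ) : Set (List α) :=
  {w | ∃ qf ∈ A.accept, qf ∈ A.evalFrom {q} w}

/-- Concatenation of two languages. -/
def concatLang {α : Type*} (K L : Set (List α)) : Set (List α) :=
  {w | ∃ u ∈ K, ∃ v ∈ L, w = u ++ v}

/-- The restriction `A|_S` of an NFA `A` to the set of states `S`. -/
def restrict {α σ : Type*} (A : NFA α σ) (S : Set σ) : NFA α S where
  step q a := {q' | (q' : σ) ∈ A.step q a}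
  start := {q | (q : σ) ∈ A.start}
  accept := {q | (q : σ) ∈ A.accept}

section Weight

variable {α ι : Type*} {μ : List α → ℝ}

lemma langWeight_le_sum_of_subset_biUnion (hμ0 : ∀ w, 0 ≤ μ w) (hμ : Summable μ)
    {L : Set (List α)} {s : Finset ι} {f : ι → Set (List α)} (hL : L ⊆ ⋃ i ∈ s, f i) :
    langWeight μ L ≤ ∑ i ∈ s, langWeight μ (f i) := by
  have hind : ∀ K : Set (List α), ∀ w, 0 ≤ K.indicator μ w :=
    fun K => Set.indicator_nonneg fun w _ => hμ0 w
  simp only [langWeight, tsum_subtype]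
  rw [← Summable.tsum_finsetSum fun i _ => hμ.indicator (f i)]
  refine Summable.tsum_le_tsum (fun w => Set.indicator_apply_le' (fun hw => ?_)
      (fun _ => Finset.sum_nonneg fun i _ => hind (f i) w))
    (hμ.indicator L) (summable_sum fun i _ => hμ.indicator (f i))
  obtain ⟨i, hi, hwi⟩ := Set.mem_iUnion₂.mp (hL hw)
  calc μ w = (f i).indicator μ w := (Set.indicator_of_mem hwi μ).symm
    _ ≤ ∑ j ∈ s, (f j).indicator μ w := Finset.single_le_sum (fun j _ => hind (f j) w) hi

end Weight

section Pruning

variable {α σ : Type*} (A : NFA α σ)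

lemma mem_eval_of_mem_eval_restrict {S : Set σ} {w : List α} {q : S}
    (hq : q ∈ (restrict A S).eval w) : (q : σ) ∈ A.eval w := by
  induction w using List.reverseRecOn generalizing q with
  | nil => exact hq
  | append_singleton v a ih =>
    rw [NFA.eval_append_singleton, NFA.mem_stepSet] at hq ⊢
    obtain ⟨p, hp, hstep⟩ := hq
    exact ⟨p, ih hp, hstep⟩

lemma lang_restrict_subset (S : Set σ) : lang (restrict A S) ⊆ lang A :=
  fun _ ⟨qf, hqf, hw⟩ => ⟨qf, hqf, mem_eval_of_mem_eval_restrict A hw⟩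

lemma mem_eval_restrict_compl_or_exists_split {V : Set σ} {w : List α} {p : σ}
    (hp : p ∈ A.eval w) :
    (∃ hpV : p ∉ V, (⟨p, hpV⟩ : (Vᶜ : Set σ)) ∈ (restrict A Vᶜ).eval w) ∨
      ∃ q ∈ V, ∃ u v, w = u ++ v ∧ q ∈ A.eval u ∧ p ∈ A.evalFrom {q} v := by
  have split_at_end : ∀ {w p}, p ∈ V → p ∈ A.eval w →
      ∃ q ∈ V, ∃ u v, w = u ++ v ∧ q ∈ A.eval u ∧ p ∈ A.evalFrom {q} v :=
    fun {w p} hpV hp => ⟨p, hpV, w, [], (List.append_nil w).symm, hp, rfl⟩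
  induction w using List.reverseRecOn generalizing p with
  | nil =>
    by_cases hpV : p ∈ V
    · exact .inr (split_at_end hpV hp)
    · exact .inl ⟨hpV, hp⟩
  | append_singleton w a ih =>
    have hp' := hp
    rw [NFA.eval_append_singleton, NFA.mem_stepSet] at hp'
    obtain ⟨p', hp', hstep⟩ := hp'
    rcases ih hp' with ⟨hp'V, hrun⟩ | ⟨q, hqV, u, v, rfl, hu, hv⟩
    · by_cases hpV : p ∈ V
      · exact .inr (split_at_end hpV hp)
      · refine .inl ⟨hpV, ?_⟩
        rw [NFA.eval_append_singleton, NFA.mem_stepSet]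
        exact ⟨⟨p', hp'V⟩, hrun, hstep⟩
    · refine .inr ⟨q, hqV, u, v ++ [a], List.append_assoc u v [a], hu, ?_⟩
      rw [NFA.evalFrom_append, NFA.evalFrom_singleton, NFA.mem_stepSet]
      exact ⟨p', hv, hstep⟩

lemma symmDiff_lang_restrict_compl_subset (V : Set σ) :
    symmDiff (lang A) (lang (restrict A Vᶜ)) ⊆ ⋃ q ∈ V, concatLang (bang A q) (langOf A q) := by
  rw [symmDiff_of_ge (lang_restrict_subset A Vᶜ)]
  rintro w ⟨⟨qf, hqf, hw⟩, hlost⟩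
  rcases mem_eval_restrict_compl_or_exists_split A hw with ⟨hqfV, hrun⟩ | ⟨q, hqV, u, v, rfl, hu, hv⟩
  · exact absurd ⟨⟨qf, hqfV⟩, hqf, hrun⟩ hlost
  · exact Set.mem_biUnion hqV ⟨u, hu, v, ⟨qf, hqf, hv⟩, rfl⟩

end Pruning

theorem pruning_distance_le_sum_labels_general {α σ : Type*}
    (A : NFA α σ) (μ : List α → ℝ) (hμ0 : ∀ w, 0 ≤ μ w) (hμ : Summable μ)
    (V : Finset σ) :
    langWeight μ (symmDiff (lang A) (lang (restrict A (↑V : Set σ)ᶜ))) ≤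
      ∑ q ∈ V, langWeight μ (concatLang (bang A q) (langOf A q)) :=
  langWeight_le_sum_of_subset_biUnion hμ0 hμ (symmDiff_lang_restrict_compl_subset A (V : Set σ))

/-- The probabilistic distance between an NFA `A` and its pruning by the set of
states `V` is bounded by the sum of the labels `ℓ³_p(q) = D(B_A(q)·L_A(q))`
over `q ∈ V`. -/
theorem pruning_distance_le_sum_labels {α σ : Type*} [Fintype α] [Fintype σ]
    (A : NFA α σ) (μ : List α → ℝ) (hμ0 : ∀ w, 0 ≤ μ w) (hμ : Summable μ)
    (V : Finset σ) :
    langWeight μ (symmDiff (lang A) (lang (restrict A (↑V : Set σ)ᶜ))) ≤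
      ∑ q ∈ V, langWeight μ (concatLang (bang A q) (langOf A q)) :=
  pruning_distance_le_sum_labels_general A μ hμ0 hμ V
end

section
/- Let A = (Q, δ, I, F) be an NFA over a finite alphabet Σ and let μ : Σ* → [0,∞) be summable with D(L) = ∑_{w∈L} μ(w). For every state q ∈ Q, the three pruning labellings are ordered: ∑_{q' ∈ F ∩ reach({q})} D(B_A(q')) ≥ D(B_A(F ∩ reach({q}))) ≥ D(B_A(q)·L_A(q)), where B_A(S) = ⋃_{q'∈S} B_A(q') for a set of states S. -/
/-- The set of states reachable from a set of states `R`. -/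
def reach {α σ : Type*} (A : NFA α σ) (R : Set σ) : Set σ :=
  {q' | ∃ w : List α, q' ∈ A.evalFrom R w}

/-
A word `uv` of `B_A(q)·L_A(q)` has `q ∈ δ(I, u)` and some `q' ∈ F ∩ δ({q}, v)`, so it lies in
`B_A(q')` with `q' ∈ F ∩ reach({q})`: the third labelling weighs a subset of the language weighed
by the second. The second weighs a union of banguages, bounded by the sum of their weights, which
is the first.
-/

section LangWeight

variable {α : Type*} {μ : List α → ℝ}

lemma ofReal_langWeight (hμ0 : ∀ w, 0 ≤ μ w) (hμ : Summable μ) (L : Set (List α)) :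
    ENNReal.ofReal (langWeight μ L) = ∑' w : L, ENNReal.ofReal (μ w) :=
  ENNReal.ofReal_tsum_of_nonneg (fun w => hμ0 w) (hμ.subtype L)

lemma langWeight_nonneg (hμ0 : ∀ w, 0 ≤ μ w) (L : Set (List α)) : 0 ≤ langWeight μ L :=
  tsum_nonneg fun w => hμ0 w

lemma langWeight_mono (hμ0 : ∀ w, 0 ≤ μ w) (hμ : Summable μ) {L M : Set (List α)}
    (h : L ⊆ M) : langWeight μ L ≤ langWeight μ M :=
  Summable.tsum_le_tsum_of_inj (Set.inclusion h) (Set.inclusion_injective h)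
    (fun w _ => hμ0 w) (fun _ => le_rfl) (hμ.subtype L) (hμ.subtype M)

lemma langWeight_biUnion_le {ι : Type*} (hμ0 : ∀ w, 0 ≤ μ w) (hμ : Summable μ)
    (S : Set ι) (L : ι → Set (List α)) (hS : Summable fun i : S => langWeight μ (L i)) :
    langWeight μ (⋃ i ∈ S, L i) ≤ ∑' i : S, langWeight μ (L i) := by
  rw [← ENNReal.ofReal_le_ofReal_iff (tsum_nonneg fun i => langWeight_nonneg hμ0 _),
    ENNReal.ofReal_tsum_of_nonneg (fun i => langWeight_nonneg hμ0 _) hS,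
    ofReal_langWeight hμ0 hμ]
  simp_rw [ofReal_langWeight hμ0 hμ]
  exact ENNReal.tsum_biUnion_le_tsum (fun w => ENNReal.ofReal (μ w)) S L

end LangWeight

lemma concatLang_bang_langOf_subset {α σ : Type*} (A : NFA α σ) (q : σ) :
    concatLang (bang A q) (langOf A q) ⊆ ⋃ q' ∈ A.accept ∩ reach A {q}, bang A q' := by
  rintro _ ⟨u, hu, v, ⟨qf, hqf, hv⟩, rfl⟩
  have hbang : qf ∈ A.eval (u ++ v) := by
    rw [NFA.eval, NFA.evalFrom_append]
    exact NFA.mem_evalFrom_iff_exists.2 ⟨q, hu, hv⟩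
  exact Set.mem_biUnion ⟨hqf, v, hv⟩ hbang

theorem pruning_labels_ordered_general {α σ : Type*} [Fintype σ]
    (A : NFA α σ) (μ : List α → ℝ) (hμ0 : ∀ w, 0 ≤ μ w) (hμ : Summable μ)
    (q : σ) :
    langWeight μ (⋃ q' ∈ A.accept ∩ reach A {q}, bang A q') ≤
      (∑' q' : (A.accept ∩ reach A {q} : Set σ), langWeight μ (bang A (q' : σ))) ∧
    langWeight μ (concatLang (bang A q) (langOf A q)) ≤
      langWeight μ (⋃ q' ∈ A.accept ∩ reach A {q}, bang A q') :=
  ⟨langWeight_biUnion_le hμ0 hμ _ _ .of_finite,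
    langWeight_mono hμ0 hμ (concatLang_bang_langOf_subset A q)⟩

/-- The three pruning labellings are ordered:
`ℓ¹_p(q) = ∑_{q' ∈ F ∩ reach({q})} D(B_A(q'))`
`≥ ℓ²_p(q) = D(B_A(F ∩ reach({q})))`
`≥ ℓ³_p(q) = D(B_A(q)·L_A(q))`. -/
theorem pruning_labels_ordered {α σ : Type*} [Fintype α] [Fintype σ]
    (A : NFA α σ) (μ : List α → ℝ) (hμ0 : ∀ w, 0 ≤ μ w) (hμ : Summable μ)
    (q : σ) :
    langWeight μ (⋃ q' ∈ A.accept ∩ reach A {q}, bang A q') ≤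
      (∑' q' : (A.accept ∩ reach A {q} : Set σ), langWeight μ (bang A (q' : σ))) ∧
    langWeight μ (concatLang (bang A q) (langOf A q)) ≤
      langWeight μ (⋃ q' ∈ A.accept ∩ reach A {q}, bang A q') :=
  pruning_labels_ordered_general A μ hμ0 hμ q
end

section
/- Let A = (Q, δ, I, F) be an NFA over a finite alphabet Σ and V ⊆ Q. Then the words newly accepted by the self-loop reduction satisfy: L(selfloop(A, V)) ∖ L(A) ⊆ (⋃_{q∈V} B_A(q)·Σ*) ∖ (⋃_{q∈V} B_A(q)·L_A(q)). -/
open Classical in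
/-- `selfloop A V` replaces, for every state `q ∈ V` and every symbol `a`, the
set of successors `δ(q, a)` by the self-loop `{q}`; transitions from states
outside `V`, as well as initial and accepting states, are unchanged. -/
noncomputable def selfloop {α σ : Type*} (A : NFA α σ) (V : Set σ) : NFA α σ where
  step q a := if q ∈ V then {q} else A.step q a
  start := A.start
  accept := A.accept

/-!
While the states of a run of `selfloop A V` on `w` stay outside `V`, it uses only transitions of
`A`; so if `A` reaches no state of `V` on any prefix of `w`, both automata have the same runs
on `w`. Conversely, a word `u ++ v` with `q ∈ A.eval u` and `v ∈ L_A(q)` is accepted by `A`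
by gluing the two runs at `q`.
-/

namespace NFA

variable {α σ : Type*} (A : NFA α σ) (V : Set σ)

theorem selfloop_stepSet_of_disjoint {S : Set σ} (hS : Disjoint S V) (a : α) :
    (selfloop A V).stepSet S a = A.stepSet S a :=
  Set.iUnion₂_congr fun _ hq => if_neg (Set.disjoint_left.mp hS hq)

theorem selfloop_evalFrom_of_disjoint {S : Set σ} {w : List α}
    (hw : ∀ u, u <+: w → Disjoint (A.evalFrom S u) V) :
    (selfloop A V).evalFrom S w = A.evalFrom S w := by
  induction w generalizing S with
  | nil => rfl
  | cons a w ih =>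
    have hS : Disjoint S V := hw [] List.nil_prefix
    rw [evalFrom_cons, evalFrom_cons, selfloop_stepSet_of_disjoint A V hS]
    exact ih fun u hu => hw (a :: u) (List.cons_prefix_cons.mpr ⟨rfl, hu⟩)

theorem mem_lang_of_mem_lang_selfloop {w : List α} (hw : w ∈ lang (selfloop A V))
    (hV : ∀ u, u <+: w → Disjoint (A.eval u) V) : w ∈ lang A := by
  obtain ⟨qf, hqf, hrun⟩ := hw
  have hrun : qf ∈ (selfloop A V).evalFrom A.start w := hrun
  rw [selfloop_evalFrom_of_disjoint A V hV] at hrun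
  exact ⟨qf, hqf, hrun⟩

theorem concatLang_bang_langOf_subset_lang (q : σ) :
    concatLang (bang A q) (langOf A q) ⊆ lang A := by
  rintro _ ⟨u, hu, v, ⟨qf, hqf, hv⟩, rfl⟩
  refine ⟨qf, hqf, ?_⟩
  rw [eval, evalFrom_append, mem_evalFrom_iff_exists]
  exact ⟨q, hu, hv⟩

end NFA

theorem selfloop_diff_subset_general {α σ : Type*}
    (A : NFA α σ) (V : Set σ) :
    lang (selfloop A V) \ lang A ⊆
      (⋃ q ∈ V, concatLang (bang A q) Set.univ) \
        (⋃ q ∈ V, concatLang (bang A q) (langOf A q)) := by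
  rintro w ⟨hsl, hnA⟩
  refine ⟨?_, ?_⟩
  · by_contra hnot
    refine hnA (A.mem_lang_of_mem_lang_selfloop V hsl fun u ⟨v, huv⟩ => ?_)
    refine Set.disjoint_right.mpr fun q hq hu => hnot ?_
    exact Set.mem_biUnion hq ⟨u, hu, v, Set.mem_univ v, huv.symm⟩
  · simp only [Set.mem_iUnion]
    rintro ⟨q, -, hw⟩
    exact hnA (A.concatLang_bang_langOf_subset_lang q hw)

/-- The words newly accepted by the self-loop reduction satisfy
`L(selfloop(A, V)) ∖ L(A) ⊆ (⋃_{q∈V} B_A(q)·Σ*) ∖ (⋃_{q∈V} B_A(q)·L_A(q))`. -/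
theorem selfloop_diff_subset {α σ : Type*} [Fintype α] [Fintype σ]
    (A : NFA α σ) (V : Set σ) :
    lang (selfloop A V) \ lang A ⊆
      (⋃ q ∈ V, concatLang (bang A q) Set.univ) \
        (⋃ q ∈ V, concatLang (bang A q) (langOf A q)) :=
  selfloop_diff_subset_general A V
end

section
/- Let Σ be a finite alphabet, let P be given by initial weights π, final weights f, and nonnegative transition matrices Δ_a (a ∈ Σ) indexed by a finite set S, and let A = (Q, δ, I, F) be an NFA over Σ. Define the product on S × Q by π_R[(p,q)] = π_p if q ∈ I and 0 otherwise, f_R[(p,q)] = f_p if q ∈ F and 0 otherwise, and E_a[(p,q),(p',q')] = (Δ_a)_{pp'} if q' ∈ δ(q,a) and 0 otherwise, with E_w the corresponding word product. Then for every word w ∈ Σ*: π_Rᵀ·E_w·f_R = N_A(w) · (πᵀ·Δ_w·f), where N_A(w) is the number of accepting runs of A over w. In particular, if A is unambiguous, then π_Rᵀ·E_w·f_R = πᵀ·Δ_w·f when w ∈ L(A) and 0 when w ∉ L(A). -/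
open Matrix
open scoped Classical
set_option linter.unusedSectionVars false


/-- `mats Δ w` is the matrix product `Δ_w = Δ_{a₁}⋯Δ_{a_k}` for the word
`w = a₁…a_k`, with `Δ_ε` the identity matrix. -/
def mats {α S : Type*} [Fintype S] [DecidableEq S]
    (Δ : α → Matrix S S ℝ) : List α → Matrix S S ℝ
  | [] => 1
  | a :: w => Δ a * mats Δ w

/-- `RunOn A q w ρ q'` holds iff `ρ` is the list of states (after `q`) of a run
of the NFA `A` over the word `w` from `q` to `q'`. -/
inductive RunOn {α σ : Type*} (A : NFA α σ) : σ → List α → List σ → σ → Prop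
  | nil (q : σ) : RunOn A q [] [] q
  | cons {q p q' : σ} {a : α} {w : List α} {ρ : List σ} :
      p ∈ A.step q a → RunOn A p w ρ q' → RunOn A q (a :: w) (p :: ρ) q'

/-- A triple `(q₀, ρ, q_F)` witnesses the acceptance of `w` by `A`. -/
def AccRun {α σ : Type*} (A : NFA α σ) (w : List α) (t : σ × List σ × σ) : Prop :=
  t.1 ∈ A.start ∧ RunOn A t.1 w t.2.1 t.2.2 ∧ t.2.2 ∈ A.accept

section Aux
variable {α σ : Type*} [Fintype σ] (A : NFA α σ)

noncomputable def cnt : List α → σ → σ → ℕ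
  | [], q, q' => if q = q' then 1 else 0
  | a :: w, q, q' => ∑ s : σ, if s ∈ A.step q a then cnt w s q' else 0

lemma runs_finite (w : List α) (q q' : σ) : {ρ : List σ | RunOn A q w ρ q'}.Finite := by
  induction w generalizing q with
  | nil =>
    refine (Set.finite_singleton ([] : List σ)).subset fun ρ h => ?_
    cases h; rfl
  | cons a w ih =>
    refine (Set.finite_iUnion (fun s : σ => (ih s).image (List.cons s))).subset fun ρ h => ?_
    cases h with
    | cons hs hr => exact Set.mem_iUnion.2 ⟨_, Set.mem_image_of_mem _ hr⟩

instance runs_finite' (w : List α) (q q' : σ) : Finite {ρ : List σ // RunOn A q w ρ q'} :=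
  (runs_finite A w q q').to_subtype

lemma run_cons_elim {a : α} {w : List α} {q q' s : σ} {ρ : List σ}
    (h : RunOn A q (a :: w) (s :: ρ) q') : s ∈ A.step q a ∧ RunOn A s w ρ q' := by
  cases h with | cons hs hr => exact ⟨hs, hr⟩

lemma run_cons_nil {a : α} {w : List α} {q q' : σ} : ¬ RunOn A q (a :: w) [] q' := by
  intro h; cases h

def runConsEquiv (a : α) (w : List α) (q q' : σ) :
    {ρ : List σ // RunOn A q (a :: w) ρ q'} ≃
      Σ s : {s : σ // s ∈ A.step q a}, {ρ : List σ // RunOn A s.1 w ρ q'} where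
  toFun := fun ⟨ρ, h⟩ => match ρ, h with
    | [], h => absurd h (run_cons_nil A)
    | s :: ρ', h => ⟨⟨s, (run_cons_elim A h).1⟩, ρ', (run_cons_elim A h).2⟩
  invFun := fun ⟨⟨s, hs⟩, ρ, hr⟩ => ⟨s :: ρ, .cons hs hr⟩
  left_inv := fun ⟨ρ, h⟩ => by
    cases ρ with
    | nil => exact absurd h (run_cons_nil A)
    | cons s ρ' => rfl
  right_inv := fun ⟨⟨s, hs⟩, ρ, hr⟩ => rfl

lemma natCard_sigma {ι : Type*} [Fintype ι] (F : ι → Type*) [∀ i, Finite (F i)] :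
    Nat.card (Σ i, F i) = ∑ i, Nat.card (F i) := by
  have : ∀ i, Fintype (F i) := fun i => Fintype.ofFinite _
  rw [Nat.card_eq_fintype_card, Fintype.card_sigma]
  simp [Nat.card_eq_fintype_card]

lemma card_runs (w : List α) (q q' : σ) :
    Nat.card {ρ : List σ // RunOn A q w ρ q'} = cnt A w q q' := by
  classical
  induction w generalizing q with
  | nil =>
    rcases eq_or_ne q q' with rfl | h
    · rw [cnt, if_pos rfl]
      rw [Nat.card_eq_one_iff_unique]
      constructor
      · constructor
        intro ⟨ρ, h⟩ ⟨ρ', h'⟩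
        cases h; cases h'; rfl
      · exact ⟨[], .nil q⟩
    · rw [cnt, if_neg h]
      have : IsEmpty {ρ : List σ // RunOn A q [] ρ q'} := by
        constructor; intro ⟨ρ, hr⟩; cases hr; exact h rfl
      exact Nat.card_of_isEmpty
  | cons a w ih =>
    rw [Nat.card_congr (runConsEquiv A a w q q'), natCard_sigma]
    simp only [ih]
    rw [← Finset.sum_subtype (Finset.univ.filter (fun s => s ∈ A.step q a)) (by simp)
        (fun s => cnt A w s q'), Finset.sum_filter, cnt]

end Aux


section Aux2
variable {α σ : Type*} [Fintype σ] [DecidableEq σ] (A : NFA α σ)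

instance accInner_finite (w : List α) (q q' : σ) :
    Finite {ρ : List σ // q ∈ A.start ∧ RunOn A q w ρ q' ∧ q' ∈ A.accept} :=
  ((runs_finite A w q q').subset fun _ h => h.2.1).to_subtype

def accEquiv (w : List α) :
    {t : σ × List σ × σ // AccRun A w t} ≃
      Σ q : σ, Σ q' : σ, {ρ : List σ // q ∈ A.start ∧ RunOn A q w ρ q' ∧ q' ∈ A.accept} where
  toFun := fun ⟨t, h⟩ => ⟨t.1, t.2.2, t.2.1, h.1, h.2.1, h.2.2⟩
  invFun := fun ⟨q, q', ρ, h1, h2, h3⟩ => ⟨(q, ρ, q'), h1, h2, h3⟩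
  left_inv := fun ⟨⟨q, ρ, q'⟩, h⟩ => rfl
  right_inv := fun ⟨q, q', ρ, h1, h2, h3⟩ => rfl

lemma card_acc (w : List α) :
    Nat.card {t : σ × List σ × σ // AccRun A w t} =
      ∑ q : σ, ∑ q' : σ, if q ∈ A.start ∧ q' ∈ A.accept then cnt A w q q' else 0 := by
  classical
  rw [Nat.card_congr (accEquiv A w), natCard_sigma]
  refine Finset.sum_congr rfl fun q _ => ?_
  rw [natCard_sigma]
  refine Finset.sum_congr rfl fun q' _ => ?_
  by_cases h : q ∈ A.start ∧ q' ∈ A.accept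
  · rw [if_pos h, ← card_runs A w q q']
    exact Nat.card_congr (Equiv.subtypeEquivRight fun ρ =>
      ⟨fun h' => h'.2.1, fun h' => ⟨h.1, h', h.2⟩⟩)
  · rw [if_neg h]
    have : IsEmpty {ρ : List σ // q ∈ A.start ∧ RunOn A q w ρ q' ∧ q' ∈ A.accept} :=
      ⟨fun ⟨ρ, h1, h2, h3⟩ => h ⟨h1, h3⟩⟩
    exact Nat.card_of_isEmpty

variable {S : Type*} [Fintype S] [DecidableEq S]

lemma mats_apply (Δ : α → Matrix S S ℝ) (E : α → Matrix (S × σ) (S × σ) ℝ)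
    (hE : ∀ a (p p' : S) (q q' : σ),
      (q' ∈ A.step q a → E a (p, q) (p', q') = Δ a p p') ∧
      (q' ∉ A.step q a → E a (p, q) (p', q') = 0))
    (w : List α) (p p' : S) (q q' : σ) :
    mats E w (p, q) (p', q') = (cnt A w q q' : ℝ) * mats Δ w p p' := by
  classical
  induction w generalizing q p with
  | nil =>
    simp only [mats, Matrix.one_apply, cnt]
    by_cases hq : q = q' <;> by_cases hp : p = p' <;>
      simp [hp, hq, Prod.ext_iff]
  | cons a w ih =>
    have hEa : ∀ (r : S) (s : σ), E a (p, q) (r, s) =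
        if s ∈ A.step q a then Δ a p r else 0 := fun r s => by
      by_cases h : s ∈ A.step q a
      · rw [if_pos h]; exact (hE a p r q s).1 h
      · rw [if_neg h]; exact (hE a p r q s).2 h
    calc mats E (a :: w) (p, q) (p', q')
        = ∑ x : S × σ, E a (p, q) x * mats E w x (p', q') := by
          rw [mats, Matrix.mul_apply]
      _ = ∑ r : S, ∑ s : σ,
            (if s ∈ A.step q a then (cnt A w s q' : ℝ) else 0) *
              (Δ a p r * mats Δ w r p') := by
          rw [Fintype.sum_prod_type]
          refine Finset.sum_congr rfl fun r _ => Finset.sum_congr rfl fun s _ => ?_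
          rw [hEa, ih]
          split_ifs <;> ring
      _ = (∑ s : σ, if s ∈ A.step q a then (cnt A w s q' : ℝ) else 0) *
            (∑ r : S, Δ a p r * mats Δ w r p') := by
          rw [Finset.sum_comm, Finset.sum_mul]
          exact Finset.sum_congr rfl fun s _ => (Finset.mul_sum _ _ _).symm
      _ = (cnt A (a :: w) q q' : ℝ) * mats Δ (a :: w) p p' := by
          rw [cnt, mats, Matrix.mul_apply]
          congr 1
          rw [Nat.cast_sum]
          refine Finset.sum_congr rfl fun s _ => ?_
          rw [apply_ite (Nat.cast : ℕ → ℝ), Nat.cast_zero]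

end Aux2


/-- Let `(π, f, {Δ_a})` be indexed by a finite set `S` with the `Δ_a`
nonnegative, and let `A` be an NFA with finite state set `σ`.  Form the product
data `π_R`, `f_R`, `E_a` on `S × σ`.  Then for every word `w`:
`π_Rᵀ·E_w·f_R = N_A(w) · (πᵀ·Δ_w·f)` where `N_A(w)` is the number of accepting
runs of `A` over `w`; in particular, if `A` is unambiguous, then
`π_Rᵀ·E_w·f_R = πᵀ·Δ_w·f` for `w ∈ L(A)` and `π_Rᵀ·E_w·f_R = 0` for
`w ∉ L(A)`. -/
theorem product_counts_accepting_runs {α σ S : Type*} [Fintype α] [Fintype σ]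
    [Fintype S] [DecidableEq S] [DecidableEq σ]
    (π f : S → ℝ) (Δ : α → Matrix S S ℝ) (hΔ : ∀ a i j, 0 ≤ Δ a i j)
    (A : NFA α σ)
    (πR fR : S × σ → ℝ) (E : α → Matrix (S × σ) (S × σ) ℝ)
    (hπR : ∀ (p : S) (q : σ),
      (q ∈ A.start → πR (p, q) = π p) ∧ (q ∉ A.start → πR (p, q) = 0))
    (hfR : ∀ (p : S) (q : σ),
      (q ∈ A.accept → fR (p, q) = f p) ∧ (q ∉ A.accept → fR (p, q) = 0))
    (hE : ∀ a (p p' : S) (q q' : σ),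
      (q' ∈ A.step q a → E a (p, q) (p', q') = Δ a p p') ∧
      (q' ∉ A.step q a → E a (p, q) (p', q') = 0)) :
    (∀ w : List α,
      πR ⬝ᵥ (mats E w).mulVec fR =
        (Nat.card {t : σ × List σ × σ // AccRun A w t} : ℝ) *
          (π ⬝ᵥ (mats Δ w).mulVec f)) ∧
    ((∀ w : List α, (∃ t, AccRun A w t) → ∃! t, AccRun A w t) →
      ∀ w : List α,
        ((∃ t, AccRun A w t) →
          πR ⬝ᵥ (mats E w).mulVec fR = π ⬝ᵥ (mats Δ w).mulVec f) ∧
        (¬ (∃ t, AccRun A w t) → πR ⬝ᵥ (mats E w).mulVec fR = 0)) := by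

  classical
  have hπ' : ∀ p q, πR (p, q) = if q ∈ A.start then π p else 0 := fun p q => by
    by_cases h : q ∈ A.start
    · rw [if_pos h]; exact (hπR p q).1 h
    · rw [if_neg h]; exact (hπR p q).2 h
  have hf' : ∀ p q, fR (p, q) = if q ∈ A.accept then f p else 0 := fun p q => by
    by_cases h : q ∈ A.accept
    · rw [if_pos h]; exact (hfR p q).1 h
    · rw [if_neg h]; exact (hfR p q).2 h
  have hD : ∀ w : List α, π ⬝ᵥ (mats Δ w).mulVec f =
      ∑ p : S, ∑ p' : S, π p * (mats Δ w p p' * f p') := fun w => by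
    simp only [dotProduct, mulVec, Finset.mul_sum]
  have part1 : ∀ w : List α,
      πR ⬝ᵥ (mats E w).mulVec fR =
        (Nat.card {t : σ × List σ × σ // AccRun A w t} : ℝ) *
          (π ⬝ᵥ (mats Δ w).mulVec f) := by
    intro w
    have step1 : πR ⬝ᵥ (mats E w).mulVec fR =
        ∑ p : S, ∑ q : σ, ∑ p' : S, ∑ q' : σ,
          πR (p, q) * (mats E w (p, q) (p', q') * fR (p', q')) := by
      simp only [dotProduct, mulVec, Fintype.sum_prod_type, Finset.mul_sum]
    have step2 : (∑ p : S, ∑ q : σ, ∑ p' : S, ∑ q' : σ,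
          πR (p, q) * (mats E w (p, q) (p', q') * fR (p', q'))) =
        ∑ q : σ, ∑ q' : σ, ∑ p : S, ∑ p' : S,
          (if q ∈ A.start ∧ q' ∈ A.accept then (cnt A w q q' : ℝ) else 0) *
            (π p * (mats Δ w p p' * f p')) := by
      rw [Finset.sum_comm]
      refine Finset.sum_congr rfl fun q _ => ?_
      rw [show (∑ p : S, ∑ p' : S, ∑ q' : σ,
            πR (p, q) * (mats E w (p, q) (p', q') * fR (p', q'))) =
          ∑ p : S, ∑ q' : σ, ∑ p' : S,
            πR (p, q) * (mats E w (p, q) (p', q') * fR (p', q'))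
        from Finset.sum_congr rfl fun p _ => Finset.sum_comm]
      rw [Finset.sum_comm]
      refine Finset.sum_congr rfl fun q' _ => Finset.sum_congr rfl fun p _ =>
        Finset.sum_congr rfl fun p' _ => ?_
      rw [hπ', hf', mats_apply A Δ E hE]
      by_cases h1 : q ∈ A.start <;> by_cases h2 : q' ∈ A.accept <;>
        simp [h1, h2] <;> ring
    have step3 : (∑ q : σ, ∑ q' : σ, ∑ p : S, ∑ p' : S,
          (if q ∈ A.start ∧ q' ∈ A.accept then (cnt A w q q' : ℝ) else 0) *
            (π p * (mats Δ w p p' * f p'))) =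
        (∑ q : σ, ∑ q' : σ,
          if q ∈ A.start ∧ q' ∈ A.accept then (cnt A w q q' : ℝ) else 0) *
          (π ⬝ᵥ (mats Δ w).mulVec f) := by
      rw [Finset.sum_mul]
      refine Finset.sum_congr rfl fun q _ => ?_
      rw [Finset.sum_mul]
      refine Finset.sum_congr rfl fun q' _ => ?_
      rw [hD, Finset.mul_sum]
      refine Finset.sum_congr rfl fun p _ => (Finset.mul_sum _ _ _).symm
    rw [step1, step2, step3, card_acc]
    congr 1
    rw [Nat.cast_sum]
    refine Finset.sum_congr rfl fun q _ => ?_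
    rw [Nat.cast_sum]
    refine Finset.sum_congr rfl fun q' _ => ?_
    rw [apply_ite (Nat.cast : ℕ → ℝ), Nat.cast_zero]
  refine ⟨part1, fun hu w => ⟨fun hex => ?_, fun hne => ?_⟩⟩
  · obtain ⟨t0, ht0, huniq⟩ := hu w hex
    have hcard : Nat.card {t : σ × List σ × σ // AccRun A w t} = 1 :=
      Nat.card_eq_one_iff_unique.mpr
        ⟨⟨fun ⟨x, hx⟩ ⟨y, hy⟩ => Subtype.ext ((huniq x hx).trans (huniq y hy).symm)⟩,
          ⟨⟨t0, ht0⟩⟩⟩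
    rw [part1 w, hcard, Nat.cast_one, one_mul]
  · have : IsEmpty {t : σ × List σ × σ // AccRun A w t} :=
      ⟨fun ⟨t, ht⟩ => hne ⟨t, ht⟩⟩
    rw [part1 w, Nat.card_of_isEmpty, Nat.cast_zero, zero_mul]
end
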